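/- Let G : U × U → ℝ (U ⊆ ℝ^s open convex) be twice continuously differentiable with G(θ, θ) constant in θ, and define H_i(γ) = ∂G(γ, δ)/∂δ_i evaluated at δ = γ. If θ̂_n is a sequence of random vectors with θ̂_n − θ₀ = O_p(1/√n) and the second derivatives of G are uniformly bounded, then [G(θ₀, θ̂_n) − G(θ₀, θ₀)] + [G(θ̂_n, θ₀) − G(θ₀, θ₀)] = Σ_i [H_i(θ₀) − H_i(θ̂_n)](θ̂_{n,i} − θ_{0,i}) + O_p(1/n), and this whole expression is O_p(1/n). -/

import Mathlib

/-!
Expand `G` to first order at `(θ₀, θ₀)`. Since `DG` is `C`-Lipschitz on `U ×ˢ U`, the remainders at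
`(θ₀, θ)` and `(θ, θ₀)` are `O(‖θ - θ₀‖²)`, and the two linear terms add up to
`DG(θ₀, θ₀)(θ - θ₀, θ - θ₀)`, the derivative of the constant map `θ ↦ G (θ, θ)`, hence to zero.
The correction `Σ_i (H_i(θ₀) - H_i(θ)) (θ_i - θ₀_i)` equals `(DG(θ₀, θ₀) - DG(θ, θ))(0, θ - θ₀)`,
again `O(‖θ - θ₀‖²)`. A quantity bounded by `K ‖θ̂_n - θ₀‖²` is `O_p(1/n)` once
`θ̂_n - θ₀ = O_p(1/√n)`.
-/

open MeasureTheory Filter Topology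

/-- `X_n = O_p(a_n)`: boundedness in probability. -/
def IsBigOp {Ω : Type*} [MeasurableSpace Ω] (μ : Measure Ω)
    (X : ℕ → Ω → ℝ) (a : ℕ → ℝ) : Prop :=
  ∀ ε > 0, ∃ M : ℝ, ∀ n, μ {ω | |X n ω| > M * a n} < ENNReal.ofReal ε

section Calculus

variable {E F : Type*} [NormedAddCommGroup E] [NormedSpace ℝ E]
  [NormedAddCommGroup F] [NormedSpace ℝ F]

theorem Convex.norm_fderiv_sub_le_of_norm_iteratedFDerivWithin_two_le {S : Set E} {f : E → F}
    {C : ℝ} (hSo : IsOpen S) (hSc : Convex ℝ S) (hf : ContDiffOn ℝ 2 f S)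
    (hC : ∀ x ∈ S, ‖iteratedFDerivWithin ℝ 2 f S x‖ ≤ C) {x y : E} (hx : x ∈ S) (hy : y ∈ S) :
    ‖fderiv ℝ f y - fderiv ℝ f x‖ ≤ C * ‖y - x‖ := by
  refine hSc.norm_image_sub_le_of_norm_fderivWithin_le
    ((hf.fderiv_of_isOpen hSo le_rfl).differentiableOn one_ne_zero) (fun z hz => ?_) hx hy
  rw [fderivWithin_of_isOpen hSo hz, ← norm_iteratedFDeriv_one, norm_iteratedFDeriv_fderiv,
    ← iteratedFDerivWithin_of_isOpen 2 hSo hz]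
  exact hC z hz

theorem Convex.norm_image_sub_sub_le_of_norm_hasFDerivWithin_sub_le {S : Set E} {f : E → F}
    {f' : E → E →L[ℝ] F} {C : ℝ} (hS : Convex ℝ S) (hf : ∀ x ∈ S, HasFDerivWithinAt f (f' x) S x)
    (hlip : ∀ x ∈ S, ∀ y ∈ S, ‖f' y - f' x‖ ≤ C * ‖y - x‖) {a b : E} (ha : a ∈ S) (hb : b ∈ S) :
    ‖f b - f a - f' a (b - a)‖ ≤ C * ‖b - a‖ ^ 2 := by
  have hseg : segment ℝ a b ⊆ S := hS.segment_subset ha hb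
  have hCba : 0 ≤ C * ‖b - a‖ := (norm_nonneg _).trans (hlip a ha b hb)
  have bound : ∀ z ∈ segment ℝ a b, ‖f' z - f' a‖ ≤ C * ‖b - a‖ := by
    intro z hz
    refine (hlip a ha z (hseg hz)).trans ?_
    rw [segment_eq_image'] at hz
    obtain ⟨t, ⟨ht0, ht1⟩, rfl⟩ := hz
    rw [add_sub_cancel_left, norm_smul, Real.norm_of_nonneg ht0, mul_left_comm]
    exact mul_le_of_le_one_left hCba ht1
  calc ‖f b - f a - f' a (b - a)‖ ≤ C * ‖b - a‖ * ‖b - a‖ :=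
        (convex_segment a b).norm_image_sub_le_of_norm_hasFDerivWithin_le'
          (fun z hz => (hf z (hseg hz)).mono hseg) bound
          (left_mem_segment ℝ a b) (right_mem_segment ℝ a b)
    _ = C * ‖b - a‖ ^ 2 := by ring

theorem fderiv_apply_diag_eq_zero {G : E × E → F} {U : Set E} {θ : E} {c : F}
    (hU : U ∈ 𝓝 θ) (hdiag : ∀ x ∈ U, G (x, x) = c) (hG : DifferentiableAt ℝ G (θ, θ)) (v : E) :
    fderiv ℝ G (θ, θ) (v, v) = 0 := by
  have hchain : HasFDerivAt (fun x => G (x, x))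
      ((fderiv ℝ G (θ, θ)).comp ((ContinuousLinearMap.id ℝ E).prod (.id ℝ E))) θ :=
    hG.hasFDerivAt.comp (f := fun x => (x, x)) θ ((hasFDerivAt_id θ).prodMk (hasFDerivAt_id θ))
  have hconst : HasFDerivAt (fun x => G (x, x)) (0 : E →L[ℝ] F) θ :=
    (hasFDerivAt_const c θ).congr_of_eventuallyEq (eventually_of_mem hU hdiag)
  simpa using congr($(hchain.unique hconst) v)

theorem fderiv_comp_prodMk_right_apply {G : E × E → F} {γ δ : E}
    (hG : DifferentiableAt ℝ G (γ, δ)) (v : E) :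
    fderiv ℝ (fun x => G (γ, x)) δ v = fderiv ℝ G (γ, δ) (0, v) := by
  have hchain : HasFDerivAt (fun x => G (γ, x))
      ((fderiv ℝ G (γ, δ)).comp (ContinuousLinearMap.inr ℝ E E)) δ :=
    hG.hasFDerivAt.comp δ (hasFDerivAt_prodMk_right γ δ)
  rw [hchain.fderiv]
  rfl

theorem abs_sub_diag_add_sub_diag_le {U : Set E} {G : E × E → ℝ} {c C : ℝ} (hU : IsOpen U)
    (hUc : Convex ℝ U) (hdiff : ∀ x ∈ U ×ˢ U, DifferentiableAt ℝ G x)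
    (hlip : ∀ x ∈ U ×ˢ U, ∀ y ∈ U ×ˢ U, ‖fderiv ℝ G y - fderiv ℝ G x‖ ≤ C * ‖y - x‖)
    (hdiag : ∀ θ ∈ U, G (θ, θ) = c) {θ₀ θ : E} (hθ₀ : θ₀ ∈ U) (hθ : θ ∈ U) :
    |(G (θ₀, θ) - G (θ₀, θ₀)) + (G (θ, θ₀) - G (θ₀, θ₀))| ≤ 2 * C * ‖θ - θ₀‖ ^ 2 := by
  set L := fderiv ℝ G (θ₀, θ₀)
  have taylor : ∀ b ∈ U ×ˢ U, |G b - G (θ₀, θ₀) - L (b - (θ₀, θ₀))| ≤ C * ‖b - (θ₀, θ₀)‖ ^ 2 :=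
    fun b hb => (hUc.prod hUc).norm_image_sub_sub_le_of_norm_hasFDerivWithin_sub_le
      (fun x hx => (hdiff x hx).hasFDerivAt.hasFDerivWithinAt) hlip ⟨hθ₀, hθ₀⟩ hb
  have right := taylor (θ₀, θ) ⟨hθ₀, hθ⟩
  have left := taylor (θ, θ₀) ⟨hθ, hθ₀⟩
  simp only [Prod.mk_sub_mk, sub_self, Prod.norm_mk, norm_zero, max_eq_right (norm_nonneg _),
    max_eq_left (norm_nonneg _)] at right left
  have cancel : L (0, θ - θ₀) + L (θ - θ₀, 0) = 0 := by
    rw [← map_add, Prod.mk_add_mk, zero_add, add_zero]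
    exact fderiv_apply_diag_eq_zero (hU.mem_nhds hθ₀) hdiag (hdiff _ ⟨hθ₀, hθ₀⟩) _
  calc |(G (θ₀, θ) - G (θ₀, θ₀)) + (G (θ, θ₀) - G (θ₀, θ₀))|
      = |(G (θ₀, θ) - G (θ₀, θ₀) - L (0, θ - θ₀)) + (G (θ, θ₀) - G (θ₀, θ₀) - L (θ - θ₀, 0))| := by
        rw [← sub_zero ((G (θ₀, θ) - G (θ₀, θ₀)) + (G (θ, θ₀) - G (θ₀, θ₀))), ← cancel]
        ring_nf
    _ ≤ C * ‖θ - θ₀‖ ^ 2 + C * ‖θ - θ₀‖ ^ 2 := (abs_add_le _ _).trans (add_le_add right left)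
    _ = 2 * C * ‖θ - θ₀‖ ^ 2 := by ring

theorem abs_fderiv_diag_sub_apply_inr_le {U : Set E} {G : E × E → ℝ} {C : ℝ}
    (hlip : ∀ x ∈ U ×ˢ U, ∀ y ∈ U ×ˢ U, ‖fderiv ℝ G y - fderiv ℝ G x‖ ≤ C * ‖y - x‖)
    {θ₀ θ : E} (hθ₀ : θ₀ ∈ U) (hθ : θ ∈ U) :
    |(fderiv ℝ G (θ₀, θ₀) - fderiv ℝ G (θ, θ)) (0, θ - θ₀)| ≤ C * ‖θ - θ₀‖ ^ 2 := by
  have hdist : ‖((θ₀, θ₀) : E × E) - (θ, θ)‖ = ‖θ - θ₀‖ := by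
    simp [norm_sub_rev]
  calc |(fderiv ℝ G (θ₀, θ₀) - fderiv ℝ G (θ, θ)) (0, θ - θ₀)|
      ≤ ‖fderiv ℝ G (θ₀, θ₀) - fderiv ℝ G (θ, θ)‖ * ‖((0, θ - θ₀) : E × E)‖ := by
        rw [← Real.norm_eq_abs]
        exact ContinuousLinearMap.le_opNorm _ _
    _ ≤ C * ‖θ - θ₀‖ * ‖θ - θ₀‖ := by
        rw [Prod.norm_mk, norm_zero, max_eq_right (norm_nonneg _), ← hdist]
        gcongr
        exact hlip _ ⟨hθ, hθ⟩ _ ⟨hθ₀, hθ₀⟩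
    _ = C * ‖θ - θ₀‖ ^ 2 := by ring

end Calculus

theorem sum_apply_single_mul_eq_apply {ι : Type*} [Fintype ι] [DecidableEq ι]
    (L : (ι → ℝ) →ₗ[ℝ] ℝ) (v : ι → ℝ) : ∑ i, L (Pi.single i 1) * v i = L v := by
  conv_rhs => rw [pi_eq_sum_univ' v, map_sum]
  simp only [map_smul, smul_eq_mul, mul_comm]

namespace IsBigOp

variable {Ω : Type*} [MeasurableSpace Ω] {μ : Measure Ω}

theorem of_abs_le_monotoneOn {X Y : ℕ → Ω → ℝ} (hY : IsBigOp μ Y fun _ => 1) {φ : ℝ → ℝ}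
    (hφ : MonotoneOn φ (Set.Ici 0)) (hXY : ∀ n ω, |X n ω| ≤ φ |Y n ω|) :
    IsBigOp μ X fun _ => 1 := by
  intro ε hε
  obtain ⟨M, hM⟩ := hY ε hε
  refine ⟨φ (max M 0), fun n => (measure_mono fun ω hω => ?_).trans_lt (hM n)⟩
  simp only [Set.mem_ofPred_eq, mul_one] at hω ⊢
  by_contra! hYM
  have := hφ (abs_nonneg (Y n ω)) (le_max_right M 0) (hYM.trans (le_max_left M 0))
  linarith [hXY n ω]

theorem natCast_mul_of_abs_le_mul_sq {X Z : ℕ → Ω → ℝ} {K : ℝ}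
    (hZ : IsBigOp μ (fun n ω => √n * Z n ω) fun _ => 1) (hK : 0 ≤ K)
    (hXZ : ∀ n ω, |X n ω| ≤ K * Z n ω ^ 2) : IsBigOp μ (fun n ω => n * X n ω) fun _ => 1 := by
  refine hZ.of_abs_le_monotoneOn (φ := fun t => K * t ^ 2)
    (fun a ha b _ hab => by dsimp only; gcongr) fun n ω => ?_
  rw [abs_mul, Nat.abs_cast, sq_abs, mul_pow, Real.sq_sqrt n.cast_nonneg, mul_left_comm]
  exact mul_le_mul_of_nonneg_left (hXZ n ω) n.cast_nonneg

end IsBigOp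

theorem symmetric_second_order_cancellation_general
    {Ω : Type*} [MeasurableSpace Ω] (μ : Measure Ω)
    {s : ℕ} (U : Set (Fin s → ℝ)) (hUopen : IsOpen U) (hUconv : Convex ℝ U)
    (G : (Fin s → ℝ) × (Fin s → ℝ) → ℝ) (hG : ContDiffOn ℝ 2 G (U ×ˢ U))
    (c : ℝ) (hGdiag : ∀ θ ∈ U, G (θ, θ) = c)
    (C : ℝ) (hC : ∀ x ∈ U ×ˢ U, ‖iteratedFDerivWithin ℝ 2 G (U ×ˢ U) x‖ ≤ C)
    (H : Fin s → (Fin s → ℝ) → ℝ)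
    (hH : ∀ i, ∀ γ ∈ U, H i γ = fderiv ℝ (fun δ => G (γ, δ)) γ (Pi.single i 1))
    (θ0 : Fin s → ℝ) (hθ0 : θ0 ∈ U)
    (θhat : ℕ → Ω → (Fin s → ℝ)) (hhatU : ∀ n ω, θhat n ω ∈ U)
    (hOp : IsBigOp μ (fun n ω => Real.sqrt n * ‖θhat n ω - θ0‖) (fun _ => 1)) :
    IsBigOp μ
      (fun n ω => n * (((G (θ0, θhat n ω) - G (θ0, θ0)) + (G (θhat n ω, θ0) - G (θ0, θ0)))
        - ∑ i, (H i θ0 - H i (θhat n ω)) * (θhat n ω i - θ0 i))) (fun _ => 1) ∧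
    IsBigOp μ
      (fun n ω => n * ((G (θ0, θhat n ω) - G (θ0, θ0)) + (G (θhat n ω, θ0) - G (θ0, θ0))))
      (fun _ => 1) := by
  have hSo : IsOpen (U ×ˢ U) := hUopen.prod hUopen
  have hC0 : 0 ≤ C := (norm_nonneg _).trans (hC (θ0, θ0) ⟨hθ0, hθ0⟩)
  have hdiff : ∀ x ∈ U ×ˢ U, DifferentiableAt ℝ G x := fun x hx =>
    (hG.contDiffAt (hSo.mem_nhds hx)).differentiableAt two_ne_zero
  have hlip : ∀ x ∈ U ×ˢ U, ∀ y ∈ U ×ˢ U, ‖fderiv ℝ G y - fderiv ℝ G x‖ ≤ C * ‖y - x‖ :=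
    fun x hx y hy =>
      (hUconv.prod hUconv).norm_fderiv_sub_le_of_norm_iteratedFDerivWithin_two_le hSo hG hC hx hy
  have hsym : ∀ θ ∈ U, |(G (θ0, θ) - G (θ0, θ0)) + (G (θ, θ0) - G (θ0, θ0))| ≤
      2 * C * ‖θ - θ0‖ ^ 2 := fun θ hθ =>
    abs_sub_diag_add_sub_diag_le hUopen hUconv hdiff hlip hGdiag hθ0 hθ
  have hsum : ∀ θ ∈ U, ∑ i, (H i θ0 - H i θ) * (θ i - θ0 i) =
      (fderiv ℝ G (θ0, θ0) - fderiv ℝ G (θ, θ)) (0, θ - θ0) := fun θ hθ => by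
    simp only [hH _ _ hθ0, hH _ _ hθ, fderiv_comp_prodMk_right_apply (hdiff _ ⟨hθ0, hθ0⟩),
      fderiv_comp_prodMk_right_apply (hdiff _ ⟨hθ, hθ⟩)]
    exact sum_apply_single_mul_eq_apply
      ((fderiv ℝ G (θ0, θ0) - fderiv ℝ G (θ, θ)).comp (.inr ℝ _ _)).toLinearMap (θ - θ0)
  refine ⟨hOp.natCast_mul_of_abs_le_mul_sq (K := 3 * C) (by positivity) fun n ω => ?_,
    hOp.natCast_mul_of_abs_le_mul_sq (by positivity) fun n ω => hsym _ (hhatU n ω)⟩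
  rw [hsum _ (hhatU n ω)]
  exact (abs_sub _ _).trans (by
    linarith [hsym _ (hhatU n ω), abs_fderiv_diag_sub_apply_inr_le hlip hθ0 (hhatU n ω)])

/-- Symmetric second-order cancellation (Lemma A.3): if `G(θ, θ)` is constant, `G` is twice
continuously differentiable with uniformly bounded second derivatives, and
`θ̂_n − θ₀ = O_p(1/√n)`, then
`[G(θ₀, θ̂_n) − G(θ₀, θ₀)] + [G(θ̂_n, θ₀) − G(θ₀, θ₀)]
  = Σ_i [H_i(θ₀) − H_i(θ̂_n)](θ̂_{n,i} − θ_{0,i}) + O_p(1/n)`,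
and the whole expression is `O_p(1/n)`. -/
theorem symmetric_second_order_cancellation
    {Ω : Type*} [MeasurableSpace Ω] (μ : Measure Ω) [IsProbabilityMeasure μ]
    {s : ℕ} (U : Set (Fin s → ℝ)) (hUopen : IsOpen U) (hUconv : Convex ℝ U)
    (G : (Fin s → ℝ) × (Fin s → ℝ) → ℝ) (hG : ContDiffOn ℝ 2 G (U ×ˢ U))
    (c : ℝ) (hGdiag : ∀ θ ∈ U, G (θ, θ) = c)
    (C : ℝ) (hC : ∀ x ∈ U ×ˢ U, ‖iteratedFDerivWithin ℝ 2 G (U ×ˢ U) x‖ ≤ C)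
    (H : Fin s → (Fin s → ℝ) → ℝ)
    (hH : ∀ i, ∀ γ ∈ U, H i γ = fderiv ℝ (fun δ => G (γ, δ)) γ (Pi.single i 1))
    (θ0 : Fin s → ℝ) (hθ0 : θ0 ∈ U)
    (θhat : ℕ → Ω → (Fin s → ℝ)) (hhatU : ∀ n ω, θhat n ω ∈ U)
    (hOp : IsBigOp μ (fun n ω => Real.sqrt n * ‖θhat n ω - θ0‖) (fun _ => 1)) :
    IsBigOp μ
      (fun n ω => n * (((G (θ0, θhat n ω) - G (θ0, θ0)) + (G (θhat n ω, θ0) - G (θ0, θ0)))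
        - ∑ i, (H i θ0 - H i (θhat n ω)) * (θhat n ω i - θ0 i))) (fun _ => 1) ∧
    IsBigOp μ
      (fun n ω => n * ((G (θ0, θhat n ω) - G (θ0, θ0)) + (G (θhat n ω, θ0) - G (θ0, θ0))))
      (fun _ => 1) :=
  symmetric_second_order_cancellation_general μ U hUopen hUconv G hG c hGdiag C hC H hH θ0 hθ0 θhat
    hhatU hOp
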